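/- Let A : U → Mat_{m×m}(ℂ) be a holomorphic matrix-valued map on a connected open set U ⊆ ℂ², let v ∈ ℂ^m be nonzero, and suppose that for every y ∈ U the holomorphic map x ↦ (A(x) - A(y))v has y as an isolated zero. Then the map f : U → ℂ^m, f(y) = A(y)v, has discrete fibers, and there is a nonempty open subset U₀ ⊆ U such that for every y₀ ∈ U₀, y₀ is a simple (multiplicity-one) zero of x ↦ f(x) - f(y₀). -/

import Mathlib

/-!
Discreteness of the fibres is a restatement of the hypothesis. Injectivity of the differential is
an open condition along `U`, because a holomorphic map has locally Lipschitz derivative (Cauchy's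
estimate on complex lines), so it remains to find one point where `df` is injective. If there is
none, `df` has rank at most one on `U`. At a point where `df ≠ 0`, choose a functional `φ` with
`φ ∘ df ≠ 0`; the rotated gradient `(-∂₂(φ ∘ f), ∂₁(φ ∘ f))` is then a locally Lipschitz vector
field, nonzero at that point and tangent to the fibres of `f` (if `df ≡ 0`, any constant field
will do). By Picard–Lindelöf it has an integral curve, along which `f` is constant, so the fibre
through the point is not discrete.
-/

open Set Metric Filter Topology

section HolomorphicRegularity

variable {E F : Type*} [NormedAddCommGroup E] [NormedSpace ℂ E]
  [NormedAddCommGroup F] [NormedSpace ℂ F]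

theorem norm_fderiv_le_of_forall_mem_closedBall_norm_le {f : E → F} {y : E} {R C : ℝ}
    (hR : 0 < R) (hf : DifferentiableOn ℂ f (closedBall y R))
    (hC : ∀ x ∈ closedBall y R, ‖f x‖ ≤ C) : ‖fderiv ℂ f y‖ ≤ C / R := by
  have hC0 : 0 ≤ C := (norm_nonneg _).trans (hC y (mem_closedBall_self hR.le))
  refine ContinuousLinearMap.opNorm_le_bound _ (by positivity) fun u => ?_
  rcases eq_or_ne u 0 with rfl | hu
  · simp
  have hu : 0 < ‖u‖ := norm_pos_iff.2 hu
  -- Cauchy's estimate on the complex line through `y` in the direction `u`.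
  have hmaps : MapsTo (fun t : ℂ => y + t • u) (closedBall 0 (R / ‖u‖)) (closedBall y R) := by
    intro t ht
    rw [mem_closedBall_zero_iff, le_div_iff₀ hu] at ht
    simpa [norm_smul] using ht
  have hslice : DifferentiableOn ℂ (fun t : ℂ => f (y + t • u)) (closedBall 0 (R / ‖u‖)) :=
    hf.comp (by fun_prop) hmaps
  have hderiv : HasDerivAt (fun t : ℂ => f (y + t • u)) (fderiv ℂ f y u) 0 := by
    have hline : HasDerivAt (fun t : ℂ => y + t • u) u 0 := by
      simpa using ((hasDerivAt_id (0 : ℂ)).smul_const u).const_add y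
    have hfy : HasFDerivAt f (fderiv ℂ f y) (y + (0 : ℂ) • u) := by
      simpa using (hf.differentiableAt (closedBall_mem_nhds y hR)).hasFDerivAt
    exact hfy.comp_hasDerivAt 0 hline
  calc ‖fderiv ℂ f y u‖ = ‖deriv (fun t : ℂ => f (y + t • u)) 0‖ := by rw [hderiv.deriv]
    _ ≤ C / (R / ‖u‖) :=
      Complex.norm_deriv_le_of_forall_mem_sphere_norm_le (by positivity)
        (hslice.diffContOnCl_ball subset_rfl)
        fun t ht => hC _ (hmaps (sphere_subset_closedBall ht))
    _ = C / R * ‖u‖ := by field_simp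

theorem norm_fderiv_sub_fderiv_le {f : E → F} {s : Set E} {x y : E} {r M : ℝ} (hr : 0 < r)
    (hf : ∀ z ∈ s, DifferentiableAt ℂ f z) (hlip : ∀ a ∈ s, ∀ b ∈ s, ‖f b - f a‖ ≤ M * ‖b - a‖)
    (hx : closedBall x r ⊆ s) (hy : closedBall y r ⊆ s) :
    ‖fderiv ℂ f y - fderiv ℂ f x‖ ≤ M / r * ‖y - x‖ := by
  -- Cauchy's estimate for `z ↦ f (z + (y - x)) - f z`, whose derivative at `x` is the difference.
  have hshift : MapsTo (· + (y - x)) (closedBall x r) s := fun z hz => hy <| by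
    rwa [mem_closedBall, dist_eq_norm, show z + (y - x) - y = z - x by abel, ← dist_eq_norm]
  have hg : DifferentiableOn ℂ (fun z => f (z + (y - x)) - f z) (closedBall x r) := fun z hz =>
    (((hf _ (hshift hz)).comp z (differentiableAt_id.add_const _)).sub
      (hf z (hx hz))).differentiableWithinAt
  have hgM : ∀ z ∈ closedBall x r, ‖f (z + (y - x)) - f z‖ ≤ M * ‖y - x‖ := fun z hz => by
    simpa using hlip z (hx hz) _ (hshift hz)
  have hgx : fderiv ℂ (fun z => f (z + (y - x)) - f z) x = fderiv ℂ f y - fderiv ℂ f x := by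
    have hfy : HasFDerivAt f (fderiv ℂ f y) (x + (y - x)) := by
      simpa using (hf y (hy (mem_closedBall_self hr.le))).hasFDerivAt
    exact ((hfy.comp x ((hasFDerivAt_id x).add_const _)).sub
      (hf x (hx (mem_closedBall_self hr.le))).hasFDerivAt).fderiv.trans (by simp)
  rw [← hgx, mul_comm, ← mul_div_assoc, mul_comm]
  exact norm_fderiv_le_of_forall_mem_closedBall_norm_le hr hg hgM

theorem exists_lipschitzOnWith_fderiv {f : E → F} {y₀ : E}
    (hf : ∀ᶠ y in 𝓝 y₀, DifferentiableAt ℂ f y) :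
    ∃ K, ∃ s ∈ 𝓝 y₀, LipschitzOnWith K (fderiv ℂ f) s := by
  set C := ‖f y₀‖ + 1
  have hbdd : ∀ᶠ y in 𝓝 y₀, ‖f y‖ < C :=
    (continuous_norm.continuousAt.comp hf.self_of_nhds.continuousAt).eventually
      (gt_mem_nhds (lt_add_one _))
  obtain ⟨δ, hδ, hδf⟩ := Metric.eventually_nhds_iff_ball.1 (hf.and hbdd)
  set r := δ / 3
  have hr : 0 < r := by positivity
  have hsub : ∀ y ∈ ball y₀ (2 * r), closedBall y r ⊆ ball y₀ δ := fun y hy =>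
    closedBall_subset_ball' (by rw [mem_ball] at hy; linarith [show δ = 3 * r by ring])
  have hdiff : ∀ y ∈ ball y₀ (2 * r), DifferentiableOn ℂ f (closedBall y r) :=
    fun y hy x hx => (hδf x (hsub y hy hx)).1.differentiableWithinAt
  have hdiffAt : ∀ y ∈ ball y₀ (2 * r), DifferentiableAt ℂ f y :=
    fun y hy => (hdiff y hy).differentiableAt (closedBall_mem_nhds y hr)
  have hlip : ∀ x ∈ ball y₀ (2 * r), ∀ y ∈ ball y₀ (2 * r), ‖f y - f x‖ ≤ C / r * ‖y - x‖ :=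
    fun x hx y hy => (convex_ball y₀ (2 * r)).norm_image_sub_le_of_norm_fderiv_le hdiffAt
      (fun z hz => norm_fderiv_le_of_forall_mem_closedBall_norm_le hr (hdiff z hz)
        fun x hx => (hδf x (hsub z hz hx)).2.le) hx hy
  have hsub' : ∀ x ∈ ball y₀ r, closedBall x r ⊆ ball y₀ (2 * r) := fun x hx =>
    closedBall_subset_ball' (by rw [mem_ball] at hx; linarith)
  refine ⟨(C / r / r).toNNReal, ball y₀ r, ball_mem_nhds y₀ hr,
    LipschitzOnWith.of_dist_le' fun x hx y hy => ?_⟩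
  rw [dist_comm, dist_eq_norm, dist_eq_norm, norm_sub_rev x]
  exact norm_fderiv_sub_fderiv_le hr hdiffAt hlip (hsub' x hx) (hsub' y hy)

theorem DifferentiableOn.continuousOn_fderiv_of_isOpen {f : E → F} {U : Set E} (hU : IsOpen U)
    (hf : DifferentiableOn ℂ f U) : ContinuousOn (fderiv ℂ f) U := fun y hy => by
  obtain ⟨K, s, hs, hlip⟩ := exists_lipschitzOnWith_fderiv (hf.eventually_differentiableAt
    (hU.mem_nhds hy))
  exact (hlip.continuousOn.continuousAt hs).continuousWithinAt

end HolomorphicRegularity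

theorem LinearMap.apply_neg_snd_fst_eq_zero_of_not_injective {K V : Type*} [Field K]
    [AddCommGroup V] [Module K V] (T : K × K →ₗ[K] V) (hT : ¬ Function.Injective T)
    (φ : V →ₗ[K] K) : T (-φ (T (0, 1)), φ (T (1, 0))) = 0 := by
  obtain ⟨z, hz, hz0⟩ : ∃ z, T z = 0 ∧ z ≠ 0 := by
    simpa [injective_iff_map_eq_zero] using hT
  set X := T (1, 0)
  set Y := T (0, 1)
  have hT_apply : ∀ p : K × K, T p = p.1 • X + p.2 • Y := fun p => by
    rw [← map_smul, ← map_smul, ← map_add]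
    simp
  rw [hT_apply] at hz ⊢
  have hφ : z.1 * φ X + z.2 * φ Y = 0 := by simpa using congrArg φ hz
  have h₁ : z.1 • (-φ Y • X + φ X • Y) = 0 := by
    calc _ = -φ Y • (z.1 • X + z.2 • Y) + (z.1 * φ X + z.2 * φ Y) • Y := by module
      _ = 0 := by rw [hz, hφ]; simp
  have h₂ : z.2 • (-φ Y • X + φ X • Y) = 0 := by
    calc _ = φ X • (z.1 • X + z.2 • Y) - (z.1 * φ X + z.2 * φ Y) • X := by module
      _ = 0 := by rw [hz, hφ]; simp
  have : z.1 ≠ 0 ∨ z.2 ≠ 0 := by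
    by_contra! h
    exact hz0 (Prod.ext h.1 h.2)
  simpa using this.elim (fun h => (smul_eq_zero.1 h₁).resolve_left h)
    (fun h => (smul_eq_zero.1 h₂).resolve_left h)

section IntegralCurve

variable {E : Type*} [NormedAddCommGroup E] [NormedSpace ℝ E] [CompleteSpace E]

theorem LipschitzOnWith.exists_eq_forall_mem_Ioo_hasDerivAt {w : E → E} {x₀ : E} {s : Set E}
    {K : NNReal} (hs : s ∈ 𝓝 x₀) (hw : LipschitzOnWith K w s) :
    ∃ γ : ℝ → E, γ 0 = x₀ ∧ ∃ ε > (0 : ℝ), ∀ t ∈ Ioo (-ε) ε, HasDerivAt γ (w (γ t)) t := by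
  obtain ⟨a, ha, has⟩ := nhds_basis_closedBall.mem_iff.1 hs
  set L : ℝ := K * a + ‖w x₀‖
  have hL : 0 ≤ L := by positivity
  have hbound : ∀ x ∈ closedBall x₀ a, ‖w x‖ ≤ L := fun x hx => by
    calc ‖w x‖ ≤ ‖w x - w x₀‖ + ‖w x₀‖ := norm_le_norm_sub_add _ _
      _ ≤ K * ‖x - x₀‖ + ‖w x₀‖ := by
          gcongr; exact hw.norm_sub_le (has hx) (has (mem_closedBall_self ha.le))
      _ ≤ K * a + ‖w x₀‖ := by gcongr; exact mem_closedBall_iff_norm.1 hx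
  set ε := a / (L + 1)
  have hε : 0 < ε := by positivity
  have h0 : (0 : ℝ) ∈ Icc (-ε) ε := ⟨by linarith, hε.le⟩
  have hpl : IsPicardLindelof (fun _ => w) ⟨0, h0⟩ x₀ ⟨a, ha.le⟩ 0 ⟨L, hL⟩ K :=
    .of_time_independent hbound (hw.mono has) <| by
      simp only [NNReal.coe_zero, sub_zero, sub_neg_eq_add, zero_add, max_self]
      calc L * ε ≤ (L + 1) * ε := by gcongr; linarith
        _ = a := by simp only [ε]; field_simp
  obtain ⟨γ, hγ0, hγ⟩ := hpl.exists_eq_forall_mem_Icc_hasDerivWithinAt₀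
  exact ⟨γ, hγ0, ε, hε, fun t ht =>
    (hγ t (Ioo_subset_Icc_self ht)).hasDerivAt (Icc_mem_nhds ht.1 ht.2)⟩

theorem frequently_eq_of_lipschitzOnWith_of_fderiv_apply_eq_zero {F : Type*}
    [NormedAddCommGroup F] [NormedSpace ℝ F] {f : E → F} {f' : E → E →L[ℝ] F} {w : E → E}
    {y₀ : E} {s : Set E} {K : NNReal} (hs : s ∈ 𝓝 y₀) (hf : ∀ y ∈ s, HasFDerivAt f (f' y) y)
    (hw : LipschitzOnWith K w s) (hker : ∀ y ∈ s, f' y (w y) = 0) (hw₀ : w y₀ ≠ 0) :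
    ∃ᶠ x in 𝓝[≠] y₀, f x = f y₀ := by
  obtain ⟨γ, rfl, ε, hε, hγ⟩ := hw.exists_eq_forall_mem_Ioo_hasDerivAt hs
  have hγ₀ : HasDerivAt γ (w (γ 0)) 0 := hγ 0 ⟨by linarith, hε⟩
  have hnear : ∀ᶠ t in 𝓝 (0 : ℝ), HasDerivAt γ (w (γ t)) t ∧ γ t ∈ s :=
    (eventually_of_mem (Ioo_mem_nhds (by linarith) hε) hγ).and
      (hγ₀.continuousAt.preimage_mem_nhds hs)
  obtain ⟨δ, hδ, hδγ⟩ := Metric.eventually_nhds_iff_ball.1 hnear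
  have hderiv : ∀ t ∈ ball (0 : ℝ) δ, HasDerivAt (f ∘ γ) 0 t := fun t ht => by
    obtain ⟨hγt, hγs⟩ := hδγ t ht
    simpa [hker _ hγs] using (hf _ hγs).comp_hasDerivAt t hγt
  have hconst : ∀ᶠ t in 𝓝 (0 : ℝ), f (γ t) = f (γ 0) :=
    eventually_of_mem (ball_mem_nhds 0 hδ) fun t ht =>
      isOpen_ball.is_const_of_deriv_eq_zero (convex_ball 0 δ).isPreconnected
        (fun t ht => (hderiv t ht).differentiableAt.differentiableWithinAt)
        (fun t ht => (hderiv t ht).deriv) ht (mem_ball_self hδ)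
  exact (hγ₀.tendsto_nhdsNE hw₀).frequently (hconst.filter_mono nhdsWithin_le_nhds).frequently

theorem frequently_eq_of_hasFDerivAt_zero [Nontrivial E] {F : Type*} [NormedAddCommGroup F]
    [NormedSpace ℝ F] {f : E → F} {y₀ : E} (hf : ∀ᶠ y in 𝓝 y₀, HasFDerivAt f (0 : E →L[ℝ] F) y) :
    ∃ᶠ x in 𝓝[≠] y₀, f x = f y₀ := by
  obtain ⟨v, hv⟩ := exists_ne (0 : E)
  exact frequently_eq_of_lipschitzOnWith_of_fderiv_apply_eq_zero hf (fun _ hy => hy)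
    (LipschitzWith.const v).lipschitzOnWith (fun _ _ => rfl) hv

end IntegralCurve

section RankOneDerivative

variable {F : Type*} [NormedAddCommGroup F] [NormedSpace ℂ F]

theorem frequently_eq_of_not_injective_fderiv {f : ℂ × ℂ → F} {y₀ : ℂ × ℂ}
    (hf : ∀ᶠ y in 𝓝 y₀, DifferentiableAt ℂ f y)
    (hrank : ∀ᶠ y in 𝓝 y₀, ¬ Function.Injective (fderiv ℂ f y)) (h₀ : fderiv ℂ f y₀ ≠ 0) :
    ∃ᶠ x in 𝓝[≠] y₀, f x = f y₀ := by
  obtain ⟨u, hu⟩ := ContinuousLinearMap.exists_ne_zero h₀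
  obtain ⟨φ, hφ⟩ := SeparatingDual.exists_ne_zero (R := ℂ) hu
  -- `L T` lies in the kernel of every non-injective `T`, and is nonzero when `φ ∘ T ≠ 0`.
  let L : ((ℂ × ℂ) →L[ℂ] F) →L[ℂ] ℂ × ℂ :=
    (-(φ ∘L ContinuousLinearMap.apply ℂ F (0, 1))).prod (φ ∘L ContinuousLinearMap.apply ℂ F (1, 0))
  obtain ⟨K, s, hs, hlip⟩ := exists_lipschitzOnWith_fderiv hf
  refine frequently_eq_of_lipschitzOnWith_of_fderiv_apply_eq_zero
    (f' := fun y => (fderiv ℂ f y).restrictScalars ℝ) (w := L ∘ fderiv ℂ f)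
    (inter_mem hs (hf.and hrank)) (fun y hy => hy.2.1.hasFDerivAt.restrictScalars ℝ)
    ((L.lipschitz.comp_lipschitzOnWith hlip).mono inter_subset_left) (fun y hy => ?_) ?_
  · simpa [L] using (fderiv ℂ f y : ℂ × ℂ →ₗ[ℂ] F).apply_neg_snd_fst_eq_zero_of_not_injective
      hy.2.2 φ
  · intro hL
    have h₁ : φ (fderiv ℂ f y₀ (1, 0)) = 0 := by simpa [L] using congrArg Prod.snd hL
    have h₂ : φ (fderiv ℂ f y₀ (0, 1)) = 0 := by simpa [L] using congrArg Prod.fst hL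
    have hu_eq : u = u.1 • ((1 : ℂ), (0 : ℂ)) + u.2 • ((0 : ℂ), (1 : ℂ)) := by ext <;> simp
    apply hφ
    rw [hu_eq, map_add, map_smul, map_smul, map_add, map_smul, map_smul, h₁, h₂]
    simp

theorem exists_injective_fderiv_of_eventually_ne {f : ℂ × ℂ → F} {U : Set (ℂ × ℂ)}
    (hU : IsOpen U) (hne : U.Nonempty) (hf : DifferentiableOn ℂ f U)
    (hfib : ∀ y ∈ U, ∀ᶠ x in 𝓝[≠] y, f x ≠ f y) : ∃ y ∈ U, Function.Injective (fderiv ℂ f y) := by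
  by_contra! hrank
  by_cases h₀ : ∃ y ∈ U, fderiv ℂ f y ≠ 0
  · obtain ⟨y, hy, h₀⟩ := h₀
    exact frequently_eq_of_not_injective_fderiv (hf.eventually_differentiableAt (hU.mem_nhds hy))
      (eventually_of_mem (hU.mem_nhds hy) hrank) h₀ (hfib y hy)
  · push Not at h₀
    obtain ⟨y, hy⟩ := hne
    refine frequently_eq_of_hasFDerivAt_zero (eventually_of_mem (hU.mem_nhds hy) fun z hz => ?_)
      (hfib y hy)
    simpa [h₀ z hz] using (hf.differentiableAt (hU.mem_nhds hz)).hasFDerivAt.restrictScalars ℝ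

end RankOneDerivative

theorem stmt14_general (m : ℕ) (U : Set (ℂ × ℂ)) (hU : IsOpen U) (hUconn : IsConnected U)
    (A : ℂ × ℂ → Matrix (Fin m) (Fin m) ℂ)
    (hA : ∀ i j : Fin m, DifferentiableOn ℂ (fun x => A x i j) U)
    (v : Fin m → ℂ)
    (hiso : ∀ y ∈ U, ∀ᶠ x in nhdsWithin y {y}ᶜ, (A x - A y).mulVec v ≠ 0) :
    (∀ y ∈ U, ∀ᶠ x in nhdsWithin y {y}ᶜ,
        (A x).mulVec v ≠ (A y).mulVec v) ∧
    ∃ U₀ : Set (ℂ × ℂ), IsOpen U₀ ∧ U₀.Nonempty ∧ U₀ ⊆ U ∧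
      ∀ y₀ ∈ U₀, Function.Injective
        (fderiv ℂ (fun y => (A y).mulVec v) y₀) := by
  set f : ℂ × ℂ → (Fin m → ℂ) := fun y => (A y).mulVec v
  have hf : DifferentiableOn ℂ f U := differentiableOn_pi.2 fun i => by
    simpa [f, Matrix.mulVec, dotProduct] using
      DifferentiableOn.fun_sum fun j _ => (hA i j).mul_const (v j)
  have hfib : ∀ y ∈ U, ∀ᶠ x in 𝓝[≠] y, f x ≠ f y := fun y hy => by
    filter_upwards [hiso y hy] with x hx
    rwa [Matrix.sub_mulVec, sub_ne_zero] at hx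
  refine ⟨hfib, U ∩ fderiv ℂ f ⁻¹' {T | Function.Injective T},
    (hf.continuousOn_fderiv_of_isOpen hU).isOpen_inter_preimage hU
      ContinuousLinearMap.isOpen_injective, ?_, inter_subset_left, fun _ hy => hy.2⟩
  exact exists_injective_fderiv_of_eventually_ne hU hUconn.nonempty hf hfib

/-- Let `A : U → Mat_{m×m}(ℂ)` be a holomorphic matrix-valued map on a connected
open set `U ⊆ ℂ²` and `v ∈ ℂ^m` nonzero, such that for every `y ∈ U` the map
`x ↦ (A(x) - A(y))v` has `y` as an isolated zero. Then `f : y ↦ A(y)v` has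
discrete fibers on `U`, and there is a nonempty open `U₀ ⊆ U` on which every
point `y₀` is a simple zero of `x ↦ f(x) - f(y₀)` (the differential of `f`
at `y₀` is injective). -/
theorem stmt14 (m : ℕ) (U : Set (ℂ × ℂ)) (hU : IsOpen U) (hUconn : IsConnected U)
    (A : ℂ × ℂ → Matrix (Fin m) (Fin m) ℂ)
    (hA : ∀ i j : Fin m, DifferentiableOn ℂ (fun x => A x i j) U)
    (v : Fin m → ℂ) (hv : v ≠ 0)
    (hiso : ∀ y ∈ U, ∀ᶠ x in nhdsWithin y {y}ᶜ, (A x - A y).mulVec v ≠ 0) :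
    (∀ y ∈ U, ∀ᶠ x in nhdsWithin y {y}ᶜ,
        (A x).mulVec v ≠ (A y).mulVec v) ∧
    ∃ U₀ : Set (ℂ × ℂ), IsOpen U₀ ∧ U₀.Nonempty ∧ U₀ ⊆ U ∧
      ∀ y₀ ∈ U₀, Function.Injective
        (fderiv ℂ (fun y => (A y).mulVec v) y₀) :=
  stmt14_general m U hU hUconn A hA v hiso
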